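/- arXiv:1801.07609 — 3 statements merged into one kernel-verified Lean document; each statement's English description precedes it below -/
import Mathlib

section
/- For any y ∈ ℝⁿ, T_{-y} ∘ T_y is the identity map on ℝⁿ; in particular T_y is a bijection with inverse T_{-y}. -/
noncomputable def arcosh (t : ℝ) : ℝ := Real.log (t + Real.sqrt (t ^ 2 - 1))

noncomputable def br {n : ℕ} (x : EuclideanSpace ℝ (Fin n)) : ℝ :=
  Real.sqrt (1 + ‖x‖ ^ 2)

noncomputable def dh {n : ℕ} (x y : EuclideanSpace ℝ (Fin n)) : ℝ :=
  arcosh (br x * br y - inner ℝ x y)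

noncomputable def T {n : ℕ} (y x : EuclideanSpace ℝ (Fin n)) : EuclideanSpace ℝ (Fin n) :=
  x + (br x + inner ℝ x y / (br y + 1)) • y

/-! Lifting `x` to the point `(br x, x)` of the hyperboloid `t² - ‖x‖² = 1`, the map `T y` is the
Lorentz boost sending `(1, 0)` to `(br y, y)`; its inverse is the boost along `-y`. Concretely,
the time coordinate transforms as `br (T y x) = br x * br y + ⟪x, y⟫`, and with this the coefficient
of `-y` in `T (-y) (T y x)` is exactly the coefficient of `y` in `T y x`. -/

section Hyperboloid

variable {n : ℕ}

lemma br_sq (x : EuclideanSpace ℝ (Fin n)) : br x ^ 2 = 1 + ‖x‖ ^ 2 :=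
  Real.sq_sqrt (by positivity)

lemma norm_le_br (x : EuclideanSpace ℝ (Fin n)) : ‖x‖ ≤ br x :=
  Real.le_sqrt_of_sq_le (by linarith)

lemma one_le_br (x : EuclideanSpace ℝ (Fin n)) : 1 ≤ br x :=
  Real.le_sqrt_of_sq_le (by nlinarith [sq_nonneg ‖x‖])

@[simp]
lemma br_neg (x : EuclideanSpace ℝ (Fin n)) : br (-x) = br x := by
  simp [br]

lemma neg_inner_le_br_mul_br (x y : EuclideanSpace ℝ (Fin n)) :
    -inner ℝ x y ≤ br x * br y :=
  calc -inner ℝ x y ≤ ‖x‖ * ‖y‖ := (neg_le_abs _).trans (abs_real_inner_le_norm x y)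
    _ ≤ br x * br y := mul_le_mul (norm_le_br x) (norm_le_br y) (norm_nonneg y)
        (zero_le_one.trans (one_le_br x))

lemma br_T (y x : EuclideanSpace ℝ (Fin n)) :
    br (T y x) = br x * br y + inner ℝ x y := by
  set l := br x + inner ℝ x y / (br y + 1) with hl
  have hc : br y + 1 ≠ 0 := by linarith [one_le_br y]
  have hnorm : ‖T y x‖ ^ 2 = ‖x‖ ^ 2 + 2 * (l * inner ℝ x y) + l ^ 2 * ‖y‖ ^ 2 := by
    rw [T, norm_add_sq_real, real_inner_smul_right, norm_smul, mul_pow, Real.norm_eq_abs, sq_abs]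
  have hsq : 1 + ‖T y x‖ ^ 2 = (br x * br y + inner ℝ x y) ^ 2 := by
    rw [hnorm, (by linarith [br_sq x] : ‖x‖ ^ 2 = br x ^ 2 - 1),
      (by linarith [br_sq y] : ‖y‖ ^ 2 = br y ^ 2 - 1), hl]
    field_simp
    ring
  rw [br, hsq, Real.sqrt_sq (by linarith [neg_inner_le_br_mul_br x y])]

lemma T_neg_T (y x : EuclideanSpace ℝ (Fin n)) : T (-y) (T y x) = x := by
  set l := br x + inner ℝ x y / (br y + 1) with hl
  have hc : br y + 1 ≠ 0 := by linarith [one_le_br y]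
  have hTx : T y x = x + l • y := rfl
  have hcoef : br (T y x) + inner ℝ (T y x) (-y) / (br (-y) + 1) = l := by
    rw [br_T, br_neg, hTx, inner_neg_right, inner_add_left, real_inner_smul_left,
      real_inner_self_eq_norm_sq, (by linarith [br_sq y] : ‖y‖ ^ 2 = br y ^ 2 - 1), hl]
    field_simp
    ring
  rw [T, hcoef, hTx, smul_neg, add_neg_cancel_right]

end Hyperboloid

theorem T_neg_comp_T {n : ℕ} (y : EuclideanSpace ℝ (Fin n)) :
    T (-y) ∘ T y = id ∧ T y ∘ T (-y) = id ∧ Function.Bijective (T y) := by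
  have hleft : T (-y) ∘ T y = id := funext (T_neg_T y)
  have hright : T y ∘ T (-y) = id := by
    simpa only [neg_neg] using (funext (T_neg_T (-y)) : T (-(-y)) ∘ T (-y) = id)
  exact ⟨hleft, hright,
    Function.bijective_iff_has_inverse.mpr ⟨T (-y), congrFun hleft, congrFun hright⟩⟩
end

section
/- Let A ⊆ ℝⁿ contain 0 and let u : A → ℝⁿ. Then u is isometric with respect to d_h and u(0) = 0 if and only if ⟨u(x), u(y)⟩ = ⟨x, y⟩ for all x, y ∈ A. -/
/-!
Since `arcosh` is injective on `[1, ∞)` and `[x][y] - ⟨x, y⟩ ≥ 1` by Cauchy–Schwarz, `u` is a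
`d_h`-isometry iff it preserves `[x][y] - ⟨x, y⟩`. Taking `y = 0` (with `u 0 = 0`) shows that
`u` preserves `[x]`, hence the inner products; conversely, `⟨u 0, u 0⟩ = 0` forces `u 0 = 0`, and
preserving inner products preserves norms, hence `[x]`.
-/

-- `arcosh` and Mathlib's `Real.arcosh` have the same defining formula.
theorem arcosh_injOn : Set.InjOn arcosh (Set.Ici 1) := Real.arcosh_injOn

section

variable {n : ℕ}

theorem br_eq_sqrt (x : EuclideanSpace ℝ (Fin n)) : br x = Real.sqrt (1 + ‖x‖ ^ 2) := rfl

@[simp]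
theorem br_zero : br (0 : EuclideanSpace ℝ (Fin n)) = 1 := by
  simp [br]

theorem br_congr_norm {x y : EuclideanSpace ℝ (Fin n)} (h : ‖x‖ = ‖y‖) : br x = br y := by
  rw [br_eq_sqrt, br_eq_sqrt, h]

theorem one_add_norm_mul_norm_le_br_mul_br (x y : EuclideanSpace ℝ (Fin n)) :
    1 + ‖x‖ * ‖y‖ ≤ br x * br y := by
  rw [br_eq_sqrt, br_eq_sqrt, ← Real.sqrt_mul (by positivity),
    ← Real.sqrt_sq (by positivity : 0 ≤ 1 + ‖x‖ * ‖y‖)]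
  exact Real.sqrt_le_sqrt (by nlinarith [sq_nonneg (‖x‖ - ‖y‖)])

theorem one_le_br_mul_br_sub_inner (x y : EuclideanSpace ℝ (Fin n)) :
    1 ≤ br x * br y - inner ℝ x y := by
  linarith [real_inner_le_norm x y, one_add_norm_mul_norm_le_br_mul_br x y]

theorem dh_eq_dh_iff {x y x' y' : EuclideanSpace ℝ (Fin n)} :
    dh x y = dh x' y' ↔ br x * br y - inner ℝ x y = br x' * br y' - inner ℝ x' y' :=
  ⟨fun h => arcosh_injOn (one_le_br_mul_br_sub_inner x y) (one_le_br_mul_br_sub_inner x' y') h,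
    fun h => by rw [dh, dh, h]⟩

theorem dh_eq_of_inner_eq {x y x' y' : EuclideanSpace ℝ (Fin n)}
    (hxx : inner ℝ x' x' = (inner ℝ x x : ℝ)) (hyy : inner ℝ y' y' = (inner ℝ y y : ℝ))
    (hxy : inner ℝ x' y' = (inner ℝ x y : ℝ)) : dh x' y' = dh x y := by
  have hnorm {z z' : EuclideanSpace ℝ (Fin n)} (h : inner ℝ z' z' = (inner ℝ z z : ℝ)) :
      ‖z'‖ = ‖z‖ := by
    rw [real_inner_self_eq_norm_sq, real_inner_self_eq_norm_sq] at h
    exact (sq_eq_sq₀ (norm_nonneg _) (norm_nonneg _)).mp h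
  rw [dh, dh, hxy, br_congr_norm (hnorm hxx), br_congr_norm (hnorm hyy)]

end

theorem dh_isometric_iff_inner {n : ℕ} (A : Set (EuclideanSpace ℝ (Fin n)))
    (hA : (0 : EuclideanSpace ℝ (Fin n)) ∈ A)
    (u : EuclideanSpace ℝ (Fin n) → EuclideanSpace ℝ (Fin n)) :
    ((∀ x ∈ A, ∀ y ∈ A, dh (u x) (u y) = dh x y) ∧ u 0 = 0) ↔
    (∀ x ∈ A, ∀ y ∈ A, (inner ℝ (u x) (u y) : ℝ) = inner ℝ x y) := by
  constructor
  · rintro ⟨hiso, hu0⟩ x hx y hy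
    have hbr : ∀ z ∈ A, br (u z) = br z := fun z hz => by
      simpa [hu0] using dh_eq_dh_iff.mp (hiso z hz 0 hA)
    have h := dh_eq_dh_iff.mp (hiso x hx y hy)
    rw [hbr x hx, hbr y hy] at h
    linarith
  · intro h
    refine ⟨fun x hx y hy => dh_eq_of_inner_eq (h x hx x hx) (h y hy y hy) (h x hx y hy), ?_⟩
    simpa using h 0 hA 0 hA
end

section
/- If c > 0 satisfies cosh(c·arcosh(t²)) = (cosh(c·arcosh(t)))² for all real t ≥ 1, then c = 1. -/
/-!
Put `F u = cosh (c * arcosh u)`. Applying the equation at `t = √u` and using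
`arcosh (2t² - 1) = 2 arcosh t` gives `F (2u - 1) = 2 F u - 1`, so `F (1 + 2ⁿ) - 1` doubles with
`n` and grows like `2ⁿ`. On the other hand `exp (arcosh u)` lies between `u` and `2u`, so `F u`
grows like `u ^ c`, i.e. `F (1 + 2ⁿ)` grows like `(2 ^ c)ⁿ`. Hence `2 ^ c = 2`.
-/

lemma arcosh_eq_real_arcosh : arcosh = Real.arcosh := rfl

lemma le_of_forall_mul_pow_le_mul_pow {α : Type*} [Field α] [LinearOrder α]
    [IsStrictOrderedRing α] [Archimedean α] {a b A B : α} (hb : 0 < b) (hA : 0 < A)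
    (h : ∀ n : ℕ, A * a ^ n ≤ B * b ^ n) : a ≤ b := by
  by_contra! hba
  obtain ⟨n, hn⟩ := pow_unbounded_of_one_lt (B / A) ((one_lt_div hb).2 hba)
  have hbn : 0 < b ^ n := pow_pos hb n
  rw [div_pow, div_lt_div_iff₀ hA hbn] at hn
  linarith [h n]

namespace Real

lemma exp_le_two_mul_cosh (x : ℝ) : exp x ≤ 2 * cosh x := by
  rw [cosh_eq]
  linarith [exp_pos (-x)]

lemma cosh_le_exp {x : ℝ} (hx : 0 ≤ x) : cosh x ≤ exp x := by
  rw [cosh_eq]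
  linarith [exp_le_exp.2 (neg_le_self hx)]

lemma arcosh_two_mul_sq_sub_one {t : ℝ} (ht : 1 ≤ t) :
    arcosh (2 * t ^ 2 - 1) = 2 * arcosh t := by
  have hcosh : 2 * t ^ 2 - 1 = cosh (2 * arcosh t) := by
    rw [cosh_two_mul, cosh_arcosh ht, sinh_arcosh ht, sq_sqrt (by nlinarith)]
    ring
  rw [hcosh, arcosh_cosh (by linarith [arcosh_nonneg ht])]

lemma cosh_mul_arcosh_two_mul_sq_sub_one (c : ℝ) {t : ℝ} (ht : 1 ≤ t) :
    cosh (c * arcosh (2 * t ^ 2 - 1)) = 2 * cosh (c * arcosh t) ^ 2 - 1 := by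
  rw [arcosh_two_mul_sq_sub_one ht, mul_left_comm, cosh_two_mul, sinh_sq]
  ring

section Growth

variable {c t : ℝ}

lemma rpow_le_exp_mul_arcosh (hc : 0 ≤ c) (ht : 1 ≤ t) : t ^ c ≤ exp (c * arcosh t) := by
  rw [mul_comm, exp_mul, exp_arcosh ht]
  exact rpow_le_rpow (by linarith) (le_add_of_nonneg_right (sqrt_nonneg _)) hc

lemma exp_mul_arcosh_le_rpow (hc : 0 ≤ c) (ht : 1 ≤ t) : exp (c * arcosh t) ≤ (2 * t) ^ c := by
  rw [mul_comm, exp_mul, exp_arcosh ht]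
  have hsqrt : √(t ^ 2 - 1) ≤ t := (sqrt_le_iff).2 ⟨by linarith, by linarith⟩
  exact rpow_le_rpow (by positivity) (by linarith) hc

lemma cosh_mul_arcosh_one_add_two_pow_le (hc : 0 ≤ c) (n : ℕ) :
    cosh (c * arcosh (1 + 2 ^ n)) ≤ (2 ^ c) ^ 2 * (2 ^ c) ^ n := by
  have hone : (1 : ℝ) ≤ 1 + 2 ^ n := le_add_of_nonneg_right (by positivity)
  calc cosh (c * arcosh (1 + 2 ^ n))
      ≤ exp (c * arcosh (1 + 2 ^ n)) := cosh_le_exp (mul_nonneg hc (arcosh_nonneg hone))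
    _ ≤ (2 * (1 + 2 ^ n)) ^ c := exp_mul_arcosh_le_rpow hc hone
    _ ≤ (2 ^ (n + 2)) ^ c := by
        gcongr
        rw [pow_add]
        nlinarith [one_le_pow₀ (n := n) (one_le_two : (1 : ℝ) ≤ 2)]
    _ = (2 ^ c) ^ 2 * (2 ^ c) ^ n := by
        rw [← rpow_pow_comm zero_le_two, pow_add, mul_comm]

lemma pow_le_two_mul_cosh_mul_arcosh_one_add_two_pow (hc : 0 ≤ c) (n : ℕ) :
    (2 ^ c) ^ n ≤ 2 * cosh (c * arcosh (1 + 2 ^ n)) := by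
  have hone : (1 : ℝ) ≤ 1 + 2 ^ n := le_add_of_nonneg_right (by positivity)
  calc ((2 : ℝ) ^ c) ^ n = (2 ^ n) ^ c := rpow_pow_comm zero_le_two c n
    _ ≤ (1 + 2 ^ n) ^ c := by gcongr; linarith
    _ ≤ exp (c * arcosh (1 + 2 ^ n)) := rpow_le_exp_mul_arcosh hc hone
    _ ≤ 2 * cosh (c * arcosh (1 + 2 ^ n)) := exp_le_two_mul_cosh _

end Growth

lemma cosh_mul_arcosh_one_add_two_pow {c : ℝ}
    (h : ∀ t : ℝ, 1 ≤ t → cosh (c * arcosh (t ^ 2)) = cosh (c * arcosh t) ^ 2) (n : ℕ) :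
    cosh (c * arcosh (1 + 2 ^ n)) = 1 + 2 ^ n * (cosh (c * arcosh 2) - 1) := by
  induction n with
  | zero => norm_num
  | succ n ih =>
    have hone : (1 : ℝ) ≤ 1 + 2 ^ n := le_add_of_nonneg_right (by positivity)
    have hsq : √(1 + 2 ^ n) ^ 2 = 1 + 2 ^ n := sq_sqrt (by linarith)
    have hsqrt : 1 ≤ √(1 + 2 ^ n) := one_le_sqrt.2 hone
    have hdouble : (1 : ℝ) + 2 ^ (n + 1) = 2 * √(1 + 2 ^ n) ^ 2 - 1 := by
      rw [hsq]
      ring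
    rw [hdouble, cosh_mul_arcosh_two_mul_sq_sub_one c hsqrt, ← h _ hsqrt, hsq, ih]
    ring

end Real

theorem cosh_functional_eq (c : ℝ) (hc : 0 < c)
    (h : ∀ t : ℝ, 1 ≤ t → Real.cosh (c * arcosh (t ^ 2)) = (Real.cosh (c * arcosh t)) ^ 2) :
    c = 1 := by
  rw [arcosh_eq_real_arcosh] at h
  have hF := Real.cosh_mul_arcosh_one_add_two_pow h
  set K := Real.cosh (c * Real.arcosh 2) - 1
  have hK : 0 < K :=
    sub_pos.2 (Real.one_lt_cosh.2 (mul_pos hc (Real.arcosh_pos one_lt_two)).ne')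
  have two_le : (2 : ℝ) ≤ 2 ^ c :=
    le_of_forall_mul_pow_le_mul_pow (by positivity) hK (B := (2 ^ c) ^ 2) fun n => by
      have := Real.cosh_mul_arcosh_one_add_two_pow_le hc.le n
      rw [hF] at this
      linarith
  have le_two : (2 : ℝ) ^ c ≤ 2 :=
    le_of_forall_mul_pow_le_mul_pow two_pos one_pos (B := 2 + 2 * K) fun n => by
      have := Real.pow_le_two_mul_cosh_mul_arcosh_one_add_two_pow hc.le n
      rw [hF] at this
      nlinarith [one_le_pow₀ (n := n) (one_le_two : (1 : ℝ) ≤ 2)]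
  apply le_antisymm
  · rwa [← Real.rpow_le_rpow_left_iff one_lt_two, Real.rpow_one]
  · rwa [← Real.rpow_le_rpow_left_iff one_lt_two, Real.rpow_one]
end
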